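/- If K₁ ⊆ K₂ are compact convex subsets of ℝ² with nonempty interiors, then the perimeter of K₁ is at most the perimeter of K₂. -/
import Mathlib

open Set MeasureTheory

open scoped RealInnerProductSpace

noncomputable section ProjAux

variable {F : Type*} [NormedAddCommGroup F] [InnerProductSpace ℝ F]

open scoped Classical in
/-- Metric projection onto a set (junk value if the set is not nonempty complete convex). -/
noncomputable def projCC (K : Set F) (u : F) : F :=
  if h : K.Nonempty ∧ IsComplete K ∧ Convex ℝ K then
    (exists_norm_eq_iInf_of_complete_convex h.1 h.2.1 h.2.2 u).choose
  else u

theorem projCC_spec {K : Set F} (hne : K.Nonempty) (hcomp : IsComplete K) (hconv : Convex ℝ K)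
    (u : F) : projCC K u ∈ K ∧ ‖u - projCC K u‖ = ⨅ w : K, ‖u - w‖ := by
  rw [projCC, dif_pos ⟨hne, hcomp, hconv⟩]
  exact (exists_norm_eq_iInf_of_complete_convex hne hcomp hconv u).choose_spec

theorem projCC_inner_le {K : Set F} (hne : K.Nonempty) (hcomp : IsComplete K)
    (hconv : Convex ℝ K) (u : F) :
    ∀ w ∈ K, ⟪u - projCC K u, w - projCC K u⟫ ≤ 0 :=
  (norm_eq_iInf_iff_real_inner_le_zero hconv (projCC_spec hne hcomp hconv u).1).mp
    (projCC_spec hne hcomp hconv u).2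

theorem projCC_eq_of {K : Set F} (hne : K.Nonempty) (hcomp : IsComplete K)
    (hconv : Convex ℝ K) {u v : F} (hv : v ∈ K)
    (h : ∀ w ∈ K, ⟪u - v, w - v⟫ ≤ 0) : projCC K u = v := by
  set p := projCC K u with hp
  have h1 : ⟪u - p, v - p⟫ ≤ 0 := projCC_inner_le hne hcomp hconv u v hv
  have h2 : ⟪u - v, p - v⟫ ≤ 0 := h p (projCC_spec hne hcomp hconv u).1
  have key : ⟪v - p, v - p⟫ = ⟪u - p, v - p⟫ + ⟪u - v, p - v⟫ := by
    simp only [inner_sub_left, inner_sub_right]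
    ring
  have h3 : ‖v - p‖ ^ 2 ≤ 0 := by
    rw [← real_inner_self_eq_norm_sq, key]; linarith
  have : v - p = 0 := by
    rw [← norm_eq_zero]
    nlinarith [norm_nonneg (v - p)]
  have := sub_eq_zero.mp this
  exact this.symm

theorem projCC_lipschitz {K : Set F} (hne : K.Nonempty) (hcomp : IsComplete K)
    (hconv : Convex ℝ K) : LipschitzWith 1 (projCC K) := by
  refine LipschitzWith.of_dist_le_mul fun u₁ u₂ => ?_
  set p₁ := projCC K u₁
  set p₂ := projCC K u₂
  have h1 : ⟪u₁ - p₁, p₂ - p₁⟫ ≤ 0 :=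
    projCC_inner_le hne hcomp hconv u₁ p₂ (projCC_spec hne hcomp hconv u₂).1
  have h2 : ⟪u₂ - p₂, p₁ - p₂⟫ ≤ 0 :=
    projCC_inner_le hne hcomp hconv u₂ p₁ (projCC_spec hne hcomp hconv u₁).1
  have key : ‖p₁ - p₂‖ ^ 2 ≤ ⟪u₁ - u₂, p₁ - p₂⟫ := by
    have expand : ⟪u₁ - u₂, p₁ - p₂⟫ - ⟪p₁ - p₂, p₁ - p₂⟫
        = -⟪u₁ - p₁, p₂ - p₁⟫ - ⟪u₂ - p₂, p₁ - p₂⟫ := by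
      simp only [inner_sub_left, inner_sub_right]
      ring
    have := real_inner_self_eq_norm_sq (p₁ - p₂)
    linarith
  have hle : ‖p₁ - p₂‖ ^ 2 ≤ ‖u₁ - u₂‖ * ‖p₁ - p₂‖ :=
    key.trans (real_inner_le_norm _ _)
  rw [NNReal.coe_one, one_mul, dist_eq_norm, dist_eq_norm]
  nlinarith [norm_nonneg (p₁ - p₂), norm_nonneg (u₁ - u₂)]

end ProjAux

/-- If `K₁ ⊆ K₂` are compact convex planar sets with nonempty interiors, then the
perimeter (1-dimensional Hausdorff measure of the boundary) of `K₁` is at most that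
of `K₂`. -/
theorem perimeter_mono_of_subset
    (K₁ K₂ : Set (EuclideanSpace ℝ (Fin 2)))
    (hK₁ : IsCompact K₁) (hconv₁ : Convex ℝ K₁) (hint₁ : (interior K₁).Nonempty)
    (hK₂ : IsCompact K₂) (hconv₂ : Convex ℝ K₂) (hint₂ : (interior K₂).Nonempty)
    (hsub : K₁ ⊆ K₂) :
    μH[1] (frontier K₁) ≤ μH[1] (frontier K₂) := by
  obtain ⟨a, ha⟩ := hint₁
  have hne₁ : K₁.Nonempty := ⟨a, interior_subset ha⟩
  have hcomp₁ : IsComplete K₁ := hK₁.isClosed.isComplete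
  -- surjectivity of the projection from ∂K₂ onto ∂K₁
  have hsurj : frontier K₁ ⊆ projCC K₁ '' frontier K₂ := by
    intro x hx
    have hxK : x ∈ K₁ := hK₁.isClosed.closure_eq ▸ frontier_subset_closure hx
    have hxint : x ∉ interior K₁ := hx.2
    obtain ⟨f, hf⟩ := geometric_hahn_banach_open_point hconv₁.interior isOpen_interior hxint
    -- all of K₁ satisfies f w ≤ f x
    have hfK : ∀ w ∈ K₁, f w ≤ f x := by
      intro w hw
      have key : ∀ t : ℝ, t ∈ Ioc (0:ℝ) 1 → f (t • a + (1 - t) • w) < f x := by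
        intro t ht
        exact hf _ (hconv₁.combo_interior_closure_mem_interior ha (subset_closure hw)
          ht.1 (by linarith [ht.2]) (by ring))
      have hc : Continuous (fun t : ℝ => f (t • a + (1 - t) • w)) := by
        apply f.continuous.comp
        exact (continuous_id.smul continuous_const).add
          ((continuous_const.sub continuous_id).smul continuous_const)
      have hcont : Filter.Tendsto (fun t : ℝ => f (t • a + (1 - t) • w)) (nhdsWithin 0 (Ioi 0))
          (nhds (f w)) := by
        have := (hc.tendsto 0).mono_left (nhdsWithin_le_nhds (s := Ioi (0:ℝ)))
        simpa using this
      refine le_of_tendsto hcont ?_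
      filter_upwards [Ioc_mem_nhdsGT_of_mem (by norm_num : (0:ℝ) ∈ Ico (0:ℝ) 1)] with t ht
      exact (key t ht).le
    set v := (InnerProductSpace.toDual ℝ (EuclideanSpace ℝ (Fin 2))).symm f with hvdef
    have hv : ∀ y, ⟪v, y⟫ = f y := fun y => InnerProductSpace.toDual_symm_apply
    have hvne : v ≠ 0 := by
      intro h0
      have h1 : f a < f x := hf a ha
      have h2 : f a = 0 := by rw [← hv a, h0, inner_zero_left]
      have h3 : f x = 0 := by rw [← hv x, h0, inner_zero_left]
      rw [h2, h3] at h1; exact lt_irrefl _ h1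
    set S := {t : ℝ | 0 ≤ t ∧ x + t • v ∈ K₂} with hS
    have h0S : (0:ℝ) ∈ S := ⟨le_refl 0, by simpa using hsub hxK⟩
    obtain ⟨R, hR⟩ := hK₂.isBounded.exists_norm_le
    have hSbd : BddAbove S := by
      refine ⟨(R + ‖x‖) / ‖v‖, fun t ht => ?_⟩
      have h1 : ‖x + t • v‖ ≤ R := hR _ ht.2
      have h2 : t * ‖v‖ = ‖t • v‖ := by
        rw [norm_smul, Real.norm_eq_abs, abs_of_nonneg ht.1]
      have h3 : ‖t • v‖ ≤ ‖x + t • v‖ + ‖x‖ := by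
        have := norm_sub_le (x + t • v) x
        simpa only [add_sub_cancel_left] using this
      have hvpos : 0 < ‖v‖ := norm_pos_iff.mpr hvne
      rw [le_div_iff₀ hvpos]
      nlinarith
    have hSclosed : IsClosed S := by
      apply IsClosed.inter isClosed_Ici
      exact hK₂.isClosed.preimage (by continuity)
    have hTS : sSup S ∈ S := hSclosed.csSup_mem ⟨0, h0S⟩ hSbd
    set T := sSup S with hT
    set y := x + T • v with hy
    have hyK₂ : y ∈ K₂ := hTS.2
    have hyfr : y ∈ frontier K₂ := by
      rw [frontier, hK₂.isClosed.closure_eq]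
      refine ⟨hyK₂, fun hyint => ?_⟩
      obtain ⟨ε, hε, hball⟩ := Metric.isOpen_iff.mp isOpen_interior y hyint
      have hvpos : 0 < ‖v‖ := norm_pos_iff.mpr hvne
      set t' := T + ε / (2 * ‖v‖) with ht'
      have hcpos : 0 < ε / (2 * ‖v‖) := by positivity
      have htpos : T < t' := lt_add_of_pos_right T hcpos
      have hdiff : x + t' • v - y = (ε / (2 * ‖v‖)) • v := by
        rw [hy, ht', add_smul]
        abel
      have hmem : x + t' • v ∈ K₂ := by
        apply interior_subset
        apply hball
        rw [Metric.mem_ball, dist_eq_norm, hdiff, norm_smul, Real.norm_eq_abs,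
          abs_of_pos hcpos]
        have hval : ε / (2 * ‖v‖) * ‖v‖ = ε / 2 := by
          field_simp
        rw [hval]
        linarith
      have htS : t' ∈ S := ⟨by linarith [hTS.1], hmem⟩
      exact absurd (le_csSup hSbd htS) (not_le.mpr htpos)
    refine ⟨y, hyfr, ?_⟩
    refine projCC_eq_of hne₁ hcomp₁ hconv₁ hxK fun w hw => ?_
    have hyx : y - x = T • v := by rw [hy]; abel
    rw [hyx, real_inner_smul_left]
    have : ⟪v, w - x⟫ ≤ 0 := by
      rw [inner_sub_right, hv, hv]
      linarith [hfK w hw]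
    exact mul_nonpos_of_nonneg_of_nonpos hTS.1 this
  have himg := (projCC_lipschitz hne₁ hcomp₁ hconv₁).hausdorffMeasure_image_le
    (d := 1) (by norm_num) (frontier K₂)
  simp only [ENNReal.coe_one, ENNReal.one_rpow, one_mul] at himg
  exact (measure_mono hsurj).trans himg
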